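/- Let φ : [0,∞) × ℝ^d → ℝ^d be C² such that for each fixed t the map x ↦ φ(t,x) is a bijection of ℝ^d whose inverse y ↦ φ^{-1}(t,y) is differentiable with det ∇_y(φ^{-1}(t,·))(y) ≥ c for some constant c > 0 and all (t,y). Then for every θ ∈ C_c((0,∞) × ℝ^d; C(T^d)), ∫_0^∞ ∫_{ℝ^d} θ(t, x, φ(t,x)/ε) dx dt → ∫_0^∞ ∫_{ℝ^d} ∫_{T^d} θ(t,x,v) dv dx dt as ε → 0⁺. (This expresses that δ_p(v − φ(t,x)/ε) ⇀ 1 in the sense of distributions.) -/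

import Mathlib

/-!
Substituting `x = ψ(t,y)` turns the inner integral into `∫ f(y, y/ε) dy` with
`f(y,v) = |det ∇ψ(t,y)| θ(t, ψ(t,y), v)`, which is continuous, compactly supported in `y` and
`ℤ^d`-periodic in `v`. Translating `y` by `εs` shifts the fast variable `y/ε` by `s` while moving
the slow variable only by `εs`. Averaging over `s` in the unit cube, and using that the cube
average of a periodic function is translation invariant, bounds
`|∫ f(y, y/ε) dy - ∫ ∫_cube f(y,v) dv dy|` by the modulus of uniform continuity of `f` at scale
`ε` times the volume of a neighbourhood of the support. Dominated convergence in `t` concludes.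
-/

open MeasureTheory Filter Topology

/-- The unit cube `[0,1]^d` in `ℝ^d`, representing the torus `T^d`. -/
def cube (d : ℕ) : Set (Fin d → ℝ) := Set.Icc 0 1

/-- A function on `ℝ^d` is `ℤ^d`-periodic. -/
def ZPeriodic {d : ℕ} {E : Type*} (φ : (Fin d → ℝ) → E) : Prop :=
  ∀ (x : Fin d → ℝ) (k : Fin d → ℤ), φ (x + fun i => (k i : ℝ)) = φ x

open Metric

section Torus

variable {d : ℕ} {E : Type*} [NormedAddCommGroup E]

theorem fract_mem_cube (v : Fin d → ℝ) : (fun i => Int.fract (v i)) ∈ cube d :=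
  ⟨fun _ => Int.fract_nonneg _, fun _ => (Int.fract_lt_one _).le⟩

theorem ZPeriodic.apply_fract {α : Type*} {g : (Fin d → ℝ) → α} (hg : ZPeriodic g)
    (v : Fin d → ℝ) : g (fun i => Int.fract (v i)) = g v := by
  rw [← hg (fun i => Int.fract (v i)) (fun i => ⌊v i⌋)]
  congr 1
  funext i
  exact Int.fract_add_floor (v i)

theorem volume_cube : volume (cube d) = 1 := by
  simp [cube, ← Set.pi_univ_Icc, volume_pi_pi, Real.volume_Icc]

theorem norm_le_one_of_mem_cube {s : Fin d → ℝ} (hs : s ∈ cube d) : ‖s‖ ≤ 1 :=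
  (pi_norm_le_iff_of_nonneg zero_le_one).2 fun i =>
    abs_le.2 ⟨by linarith [hs.1 i, show (0 : Fin d → ℝ) i = 0 from rfl], hs.2 i⟩

theorem ZPeriodic.setIntegral_cube_add [NormedSpace ℝ E] {g : (Fin d → ℝ) → E}
    (hg : ZPeriodic g) (a : Fin d → ℝ) :
    ∫ s in cube d, g (a + s) = ∫ s in cube d, g s := by
  set b := Pi.basisFun ℝ (Fin d)
  have : VAddInvariantMeasure (Submodule.span ℤ (Set.range b)) (Fin d → ℝ) volume :=
    inferInstanceAs (VAddInvariantMeasure (Submodule.span ℤ (Set.range b)).toAddSubgroup _ _)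
  have hF := ZSpan.isAddFundamentalDomain b volume
  have hinv : ∀ (z : Submodule.span ℤ (Set.range b)) x, g (z +ᵥ x) = g x := by
    rintro ⟨z, hz⟩ x
    obtain ⟨k, rfl⟩ : ∃ k : Fin d → ℤ, (fun i => (k i : ℝ)) = z := by
      choose k hk using (b.mem_span_iff_repr_mem ℤ z).1 hz
      exact ⟨k, funext hk⟩
    rw [Submodule.vadd_def, vadd_eq_add, add_comm]
    exact hg x k
  have hcube : ∀ h : (Fin d → ℝ) → E,
      ∫ s in cube d, h s = ∫ s in ZSpan.fundamentalDomain b, h s := by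
    intro h
    rw [ZSpan.fundamentalDomain_pi_basisFun]
    exact setIntegral_congr_set (Measure.univ_pi_Ico_ae_eq_Icc (f := 0) (g := 1)).symm
  rw [hcube, hcube, ← (hF.vadd_of_comm a).setIntegral_eq hF hinv]
  exact ((measurePreserving_vadd a volume).setIntegral_image_emb
    (measurableEmbedding_const_vadd a) _ _).symm

theorem exists_norm_le_of_zPeriodic {X : Type*} [TopologicalSpace X]
    {f : X × (Fin d → ℝ) → E} (hf : Continuous f) {K : Set X} (hK : IsCompact K)
    (hsupp : ∀ x v, x ∉ K → f (x, v) = 0) (hper : ∀ x, ZPeriodic fun v => f (x, v)) :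
    ∃ M, ∀ p, ‖f p‖ ≤ M := by
  obtain ⟨M, hM⟩ := (hK.prod isCompact_Icc).exists_bound_of_continuousOn hf.continuousOn
  refine ⟨max M 0, fun ⟨x, v⟩ => ?_⟩
  by_cases hx : x ∈ K
  · rw [← (hper x).apply_fract v]
    exact (hM (x, fun i => Int.fract (v i)) ⟨hx, fract_mem_cube v⟩).trans (le_max_left _ _)
  · simp [hsupp x v hx]

theorem uniformContinuous_of_zPeriodic {X : Type*} [PseudoMetricSpace X] [ProperSpace X]
    {f : X × (Fin d → ℝ) → E} (hf : Continuous f) {S : Set X} (hS : IsCompact S)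
    (hsupp : ∀ x v, x ∉ S → f (x, v) = 0) (hper : ∀ x, ZPeriodic fun v => f (x, v)) :
    UniformContinuous f := by
  have hC : IsCompact (cthickening 1 S ×ˢ cthickening 1 (cube d)) :=
    hS.cthickening.prod isCompact_Icc.cthickening
  rw [Metric.uniformContinuous_iff]
  intro δ hδ
  obtain ⟨η, hη, hfη⟩ :=
    Metric.uniformContinuousOn_iff.1 (hC.uniformContinuousOn_of_continuous hf.continuousOn) δ hδ
  refine ⟨min η 1, lt_min hη one_pos, ?_⟩
  rintro ⟨x, v⟩ ⟨x', v'⟩ h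
  obtain ⟨⟨hxη, hvη⟩, hx1, hv1⟩ :
      (dist x x' < η ∧ dist v v' < η) ∧ dist x x' < 1 ∧ dist v v' < 1 := by
    simpa only [Prod.dist_eq, lt_min_iff, max_lt_iff] using h
  -- shift by a common lattice vector so that `v` lands in the unit cube
  set k : Fin d → ℤ := fun i => -⌊v i⌋
  have hv : (v + fun i => (k i : ℝ)) ∈ cube d := by
    convert fract_mem_cube v using 1
    funext i
    simp [k, Int.fract, sub_eq_add_neg]
  rw [← show f (x, v + fun i => (k i : ℝ)) = f (x, v) from hper x v k,
    ← show f (x', v' + fun i => (k i : ℝ)) = f (x', v') from hper x' v' k]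
  by_cases hxS : x ∈ S ∨ x' ∈ S
  · have hx : x ∈ cthickening 1 S ∧ x' ∈ cthickening 1 S := by
      rcases hxS with hxS | hxS
      · exact ⟨self_subset_cthickening S hxS,
          mem_cthickening_of_dist_le x' x 1 S hxS (dist_comm x x' ▸ hx1.le)⟩
      · exact ⟨mem_cthickening_of_dist_le x x' 1 S hxS hx1.le, self_subset_cthickening S hxS⟩
    have hv' : (v' + fun i => (k i : ℝ)) ∈ cthickening 1 (cube d) :=
      mem_cthickening_of_dist_le _ _ 1 _ hv (by rw [dist_add_right, dist_comm]; exact hv1.le)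
    refine hfη _ ⟨hx.1, self_subset_cthickening _ hv⟩ _ ⟨hx.2, hv'⟩ ?_
    rw [Prod.dist_eq, dist_add_right]
    exact max_lt hxη hvη
  · rw [not_or] at hxS
    simpa [hsupp _ _ hxS.1, hsupp _ _ hxS.2] using hδ

end Torus

theorem norm_integral_le_of_forall_notMem_eq_zero {α E : Type*} [NormedAddCommGroup E]
    [NormedSpace ℝ E] [MeasurableSpace α] {μ : Measure α} {g : α → E} {T : Set α} {C : ℝ}
    (hT : μ T < ⊤) (hzero : ∀ x ∉ T, g x = 0) (hC : ∀ x ∈ T, ‖g x‖ ≤ C) :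
    ‖∫ x, g x ∂μ‖ ≤ C * μ.real T := by
  rw [← setIntegral_eq_integral_of_forall_compl_eq_zero hzero]
  exact norm_setIntegral_le_of_norm_le_const hT hC

theorem norm_integral_section_le_indicator {α β E : Type*} [NormedAddCommGroup E]
    [NormedSpace ℝ E] [MeasurableSpace β] {μ : Measure β} {F : α × β → E} {K : Set (α × β)}
    (hK : μ (Prod.snd '' K) < ⊤) (hzero : ∀ p ∉ K, F p = 0) {M : ℝ} (hM : ∀ p, ‖F p‖ ≤ M)
    (a : α) :
    ‖∫ b, F (a, b) ∂μ‖ ≤ (Prod.fst '' K).indicator (fun _ => M * μ.real (Prod.snd '' K)) a := by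
  by_cases ha : a ∈ Prod.fst '' K
  · rw [Set.indicator_of_mem ha]
    exact norm_integral_le_of_forall_notMem_eq_zero hK
      (fun b hb => hzero _ fun h => hb ⟨_, h, rfl⟩) fun b _ => hM _
  · have hzero_a : ∀ b, F (a, b) = 0 := fun b => hzero _ fun h => ha ⟨_, h, rfl⟩
    simp [Set.indicator_of_notMem ha, hzero_a]

section Oscillation

variable {d : ℕ} {E : Type*} [NormedAddCommGroup E]
  {f : (Fin d → ℝ) × (Fin d → ℝ) → E} {S : Set (Fin d → ℝ)}

theorem integrable_prod_restrict_cube (hf : Continuous f) (hS : IsCompact S)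
    (hsupp : ∀ y v, y ∉ S → f (y, v) = 0) :
    Integrable f (volume.prod (volume.restrict (cube d))) := by
  have h := Measure.prod_restrict (μ := (volume : Measure (Fin d → ℝ))) (ν := volume)
    Set.univ (cube d)
  rw [Measure.restrict_univ, ← Measure.volume_eq_prod] at h
  rw [h]
  have hcompact : IsCompact (S ×ˢ cube d) := hS.prod isCompact_Icc
  refine (hf.continuousOn.integrableOn_compact hcompact).of_forall_sdiff_eq_zero
    (MeasurableSet.univ.prod measurableSet_Icc) ?_
  rintro ⟨y, v⟩ ⟨⟨-, hv⟩, hyv⟩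
  exact hsupp y v fun hy => hyv ⟨hy, hv⟩

theorem norm_integral_comp_add_sub_le [NormedSpace ℝ E] (hf : Continuous f) (hS : IsCompact S)
    (hsupp : ∀ y v, y ∉ S → f (y, v) = 0) {a : Fin d → ℝ} (ha : ‖a‖ ≤ 1) {δ : ℝ}
    (hδ : ∀ y v, ‖f (y + a, v) - f (y, v)‖ ≤ δ) {w : (Fin d → ℝ) → Fin d → ℝ}
    (hw : Continuous w) :
    ‖(∫ y, f (y + a, w y)) - ∫ y, f (y, w y)‖ ≤ δ * volume.real (cthickening 1 S) := by
  have hzero_add : ∀ y ∉ cthickening 1 S, f (y + a, w y) = 0 := fun y hy =>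
    hsupp _ _ fun h => hy (mem_cthickening_of_dist_le y (y + a) 1 S h (by simpa using ha))
  have hzero : ∀ y ∉ cthickening 1 S, f (y, w y) = 0 := fun y hy =>
    hsupp _ _ fun h => hy (self_subset_cthickening S h)
  have hint_add : Integrable fun y => f (y + a, w y) :=
    (by fun_prop : Continuous fun y => f (y + a, w y)).integrable_of_hasCompactSupport
      (HasCompactSupport.intro hS.cthickening hzero_add)
  have hint : Integrable fun y => f (y, w y) :=
    (by fun_prop : Continuous fun y => f (y, w y)).integrable_of_hasCompactSupport
      (HasCompactSupport.intro hS.cthickening hzero)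
  rw [← integral_sub hint_add hint]
  exact norm_integral_le_of_forall_notMem_eq_zero hS.cthickening.measure_lt_top
    (fun y hy => by rw [hzero_add y hy, hzero y hy, sub_zero]) fun y _ => hδ y (w y)

theorem norm_integral_comp_smul_inv_sub_le [NormedSpace ℝ E] [CompleteSpace E]
    (hf : Continuous f) (hS : IsCompact S)
    (hsupp : ∀ y v, y ∉ S → f (y, v) = 0) (hper : ∀ y, ZPeriodic fun v => f (y, v))
    {ε δ : ℝ} (hε : 0 < ε) (hε1 : ε ≤ 1)
    (hδ : ∀ y y' v, dist y y' ≤ ε → ‖f (y, v) - f (y', v)‖ ≤ δ) :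
    ‖(∫ y, f (y, ε⁻¹ • y)) - ∫ y, ∫ v in cube d, f (y, v)‖
      ≤ δ * volume.real (cthickening 1 S) := by
  set B : (Fin d → ℝ) → E := fun s => ∫ y, f (y, ε⁻¹ • y + s)
  have hint : Integrable (Function.uncurry fun y s => f (y, ε⁻¹ • y + s))
      (volume.prod (volume.restrict (cube d))) :=
    integrable_prod_restrict_cube (by fun_prop) hS fun y s hy => hsupp _ _ hy
  -- translating `y` by `ε • s` shifts the fast variable `ε⁻¹ • y` by `s`
  have hA : ∀ s, ∫ y, f (y, ε⁻¹ • y) = ∫ y, f (y + ε • s, ε⁻¹ • y + s) := fun s => by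
    rw [← integral_add_right_eq_self (fun y => f (y, ε⁻¹ • y)) (ε • s)]
    simp [smul_add, inv_smul_smul₀ hε.ne']
  have hAB : ∀ s ∈ cube d, ‖(∫ y, f (y, ε⁻¹ • y)) - B s‖ ≤ δ * volume.real (cthickening 1 S) := by
    intro s hs
    have has : ‖ε • s‖ ≤ ε := by
      simpa [norm_smul, abs_of_pos hε] using
        mul_le_mul_of_nonneg_left (norm_le_one_of_mem_cube hs) hε.le
    rw [hA s]
    refine norm_integral_comp_add_sub_le hf hS hsupp (has.trans hε1) (fun y v => hδ _ _ _ ?_)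
      (by fun_prop)
    simpa using has
  have hI : ∫ y, ∫ v in cube d, f (y, v) = ∫ s in cube d, B s := by
    calc ∫ y, ∫ v in cube d, f (y, v) = ∫ y, ∫ s in cube d, f (y, ε⁻¹ • y + s) :=
          integral_congr_ae (Eventually.of_forall fun y => ((hper y).setIntegral_cube_add _).symm)
      _ = ∫ s in cube d, B s := integral_integral_swap hint
  have hvol : volume.real (cube d) = 1 := by simp [measureReal_def, volume_cube]
  have hconst : Integrable (fun _ : Fin d → ℝ => ∫ y, f (y, ε⁻¹ • y)) (volume.restrict (cube d)) :=
    integrableOn_const (by simp [volume_cube])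
  have hB : IntegrableOn B (cube d) := hint.integral_prod_right
  calc ‖(∫ y, f (y, ε⁻¹ • y)) - ∫ y, ∫ v in cube d, f (y, v)‖
        = ‖∫ s in cube d, ((∫ y, f (y, ε⁻¹ • y)) - B s)‖ := by
        rw [integral_sub hconst hB, setIntegral_const, hvol, one_smul, hI]
    _ ≤ δ * volume.real (cthickening 1 S) * volume.real (cube d) :=
        norm_setIntegral_le_of_norm_le_const (by simp [volume_cube]) hAB
    _ = δ * volume.real (cthickening 1 S) := by rw [hvol, mul_one]

theorem tendsto_integral_comp_smul_inv [NormedSpace ℝ E] [CompleteSpace E]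
    (hf : Continuous f) (hS : IsCompact S)
    (hsupp : ∀ y v, y ∉ S → f (y, v) = 0) (hper : ∀ y, ZPeriodic fun v => f (y, v)) :
    Tendsto (fun ε : ℝ => ∫ y, f (y, ε⁻¹ • y)) (𝓝[>] 0)
      (𝓝 (∫ y, ∫ v in cube d, f (y, v))) := by
  set V := volume.real (cthickening 1 S)
  rw [Metric.tendsto_nhds]
  intro δ hδ
  have hδ' : 0 < δ / (V + 1) := by positivity
  obtain ⟨η, hη, hfη⟩ := Metric.uniformContinuous_iff.1
    (uniformContinuous_of_zPeriodic hf hS hsupp hper) _ hδ'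
  filter_upwards [Ioo_mem_nhdsGT (lt_min hη one_pos)] with ε ⟨hε, hεη⟩
  rw [dist_eq_norm]
  refine (norm_integral_comp_smul_inv_sub_le (δ := δ / (V + 1)) hf hS hsupp hper hε
    (hεη.le.trans (min_le_right _ _))
    (fun y y' v hyy' => ?_)).trans_lt ?_
  · rw [← dist_eq_norm]
    refine (hfη ?_).le
    simpa [Prod.dist_eq] using hyy'.trans_lt (hεη.trans_le (min_le_left _ _))
  · rw [div_mul_eq_mul_div, div_lt_iff₀ (by positivity)]
    exact mul_lt_mul_of_pos_left (lt_add_one V) hδ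

end Oscillation

section ChangeOfVariables

variable {V : Type*} [NormedAddCommGroup V] [NormedSpace ℝ V] {φ ψ : V → V}

theorem det_fderiv_mul_det_fderiv_of_rightInverse (hφ : Differentiable ℝ φ)
    (hψ : Differentiable ℝ ψ) (hright : Function.RightInverse ψ φ) (y : V) :
    (fderiv ℝ φ (ψ y)).det * (fderiv ℝ ψ y).det = 1 := by
  have hcomp := (hφ (ψ y)).hasFDerivAt.comp y (hψ y).hasFDerivAt
  rw [show φ ∘ ψ = id from funext hright] at hcomp
  have := congrArg ContinuousLinearMap.det (hcomp.unique (hasFDerivAt_id y))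
  simpa [ContinuousLinearMap.det, LinearMap.det_comp] using this

theorem continuous_det_fderiv_of_rightInverse [FiniteDimensional ℝ V] (hφ : ContDiff ℝ 1 φ)
    (hψ : Differentiable ℝ ψ) (hright : Function.RightInverse ψ φ) :
    Continuous fun y => (fderiv ℝ ψ y).det := by
  have hdet := det_fderiv_mul_det_fderiv_of_rightInverse (hφ.differentiable one_ne_zero) hψ hright
  simp_rw [eq_inv_of_mul_eq_one_right (hdet _)]
  exact ((ContinuousLinearMap.continuous_det.comp (hφ.continuous_fderiv one_ne_zero)).comp
    hψ.continuous).inv₀ fun y => left_ne_zero_of_mul_eq_one (hdet y)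

theorem integral_eq_integral_abs_det_fderiv_smul_of_bijective [FiniteDimensional ℝ V]
    [MeasurableSpace V] [BorelSpace V]
    (μ : Measure V) [μ.IsAddHaarMeasure] {E : Type*} [NormedAddCommGroup E] [NormedSpace ℝ E]
    (hψ : Differentiable ℝ ψ) (hbij : Function.Bijective ψ) (g : V → E) :
    ∫ x, g x ∂μ = ∫ y, |(fderiv ℝ ψ y).det| • g (ψ y) ∂μ := by
  have h := integral_image_eq_integral_abs_det_fderiv_smul μ MeasurableSet.univ
    (fun y _ => (hψ y).hasFDerivAt.hasFDerivWithinAt) hbij.injective.injOn g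
  rwa [Set.image_univ, hbij.surjective.range_eq, setIntegral_univ, setIntegral_univ] at h

end ChangeOfVariables

theorem tendsto_integral_comp_smul_inv_of_diffeomorph {d : ℕ} {E : Type*} [NormedAddCommGroup E]
    [NormedSpace ℝ E] [CompleteSpace E] {φ ψ : (Fin d → ℝ) → Fin d → ℝ}
    (hφ : ContDiff ℝ 1 φ) (hψ : Differentiable ℝ ψ) (hleft : Function.LeftInverse ψ φ)
    (hright : Function.RightInverse ψ φ) {h : (Fin d → ℝ) × (Fin d → ℝ) → E} (hh : Continuous h)
    {S : Set (Fin d → ℝ)} (hS : IsCompact S) (hsupp : ∀ x v, x ∉ S → h (x, v) = 0)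
    (hper : ∀ x, ZPeriodic fun v => h (x, v)) :
    Tendsto (fun ε : ℝ => ∫ x, h (x, ε⁻¹ • φ x)) (𝓝[>] 0)
      (𝓝 (∫ x, ∫ v in cube d, h (x, v))) := by
  have hJ : Continuous fun y => |(fderiv ℝ ψ y).det| :=
    (continuous_det_fderiv_of_rightInverse hφ hψ hright).abs
  have hcov := integral_eq_integral_abs_det_fderiv_smul_of_bijective (E := E) volume hψ
    ⟨hright.injective, hleft.surjective⟩
  have hlim := tendsto_integral_comp_smul_inv
    (f := fun p => |(fderiv ℝ ψ p.1).det| • h (ψ p.1, p.2))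
    ((hJ.comp continuous_fst).smul (hh.comp ((hψ.continuous.comp continuous_fst).prodMk
      continuous_snd))) (hS.image hφ.continuous)
    (fun y v hy => by rw [hsupp _ _ fun hx => hy ⟨_, hx, hright y⟩, smul_zero])
    (fun y v k => congrArg (|(fderiv ℝ ψ y).det| • ·) (hper (ψ y) v k))
  convert hlim using 2 with ε
  · rw [hcov]
    exact integral_congr_ae (Eventually.of_forall fun y => by simp only [hright y])
  · rw [hcov]
    simp_rw [integral_smul]

theorem statement17_general (d : ℕ)
    (φ : ℝ → (Fin d → ℝ) → Fin d → ℝ)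
    (hφ : ContDiff ℝ 2 (fun p : ℝ × (Fin d → ℝ) => φ p.1 p.2))
    (ψ : ℝ → (Fin d → ℝ) → Fin d → ℝ)
    (hψleft : ∀ t, Function.LeftInverse (ψ t) (φ t))
    (hψright : ∀ t, Function.RightInverse (ψ t) (φ t))
    (hψdiff : ∀ t y, DifferentiableAt ℝ (ψ t) y)
    (θ : ℝ × (Fin d → ℝ) × (Fin d → ℝ) → ℝ) (hθc : Continuous θ)
    (hθper : ∀ (t : ℝ) (x v : Fin d → ℝ) (k : Fin d → ℤ),
      θ (t, x, v + fun i => (k i : ℝ)) = θ (t, x, v))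
    (K : Set (ℝ × (Fin d → ℝ))) (hK : IsCompact K)
    (hθsupp : ∀ (t : ℝ) (x v : Fin d → ℝ), (t, x) ∉ K → θ (t, x, v) = 0) :
    Tendsto
      (fun ε : ℝ => ∫ t in Set.Ioi (0:ℝ), ∫ x, θ (t, x, ε⁻¹ • φ t x))
      (𝓝[>] (0:ℝ))
      (𝓝 (∫ t in Set.Ioi (0:ℝ), ∫ x, ∫ v in cube d, θ (t, x, v))) := by
  obtain ⟨M, hM⟩ := exists_norm_le_of_zPeriodic
    (f := fun p : (ℝ × (Fin d → ℝ)) × (Fin d → ℝ) => θ (p.1.1, p.1.2, p.2)) (by fun_prop) hK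
    (fun p v hp => hθsupp _ _ _ hp) (fun p => hθper p.1 p.2)
  have hφt : ∀ t, ContDiff ℝ 1 (φ t) := fun t =>
    (hφ.comp (contDiff_const.prodMk contDiff_id)).of_le one_le_two
  have hKx : IsCompact (Prod.snd '' K) := hK.image continuous_snd
  have hKt : IsCompact (Prod.fst '' K) := hK.image continuous_fst
  refine tendsto_integral_filter_of_dominated_convergence
    ((Prod.fst '' K).indicator fun _ => M * volume.real (Prod.snd '' K)) ?_ ?_ ?_ ?_
  · exact Eventually.of_forall fun ε =>
      (hθc.comp (continuous_fst.prodMk (continuous_snd.prodMk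
        (hφ.continuous.const_smul ε⁻¹)))).stronglyMeasurable.integral_prod_right'
        |>.aestronglyMeasurable
  · exact Eventually.of_forall fun ε => Eventually.of_forall <|
      norm_integral_section_le_indicator (F := fun p => θ (p.1, p.2, ε⁻¹ • φ p.1 p.2))
        hKx.measure_lt_top (fun p hp => hθsupp _ _ _ hp) fun p => hM (p, _)
  · exact ((integrable_indicator_iff hKt.measurableSet).2
      (integrableOn_const hKt.measure_lt_top.ne)).integrableOn
  · exact Eventually.of_forall fun t =>
      tendsto_integral_comp_smul_inv_of_diffeomorph (h := fun p => θ (t, p.1, p.2)) (hφt t)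
        (hψdiff t) (hψleft t) (hψright t) (by fun_prop) hKx
        (fun x v hx => hθsupp t x v fun h => hx ⟨_, h, rfl⟩) (hθper t)

/-- if `φ(t,·)` is a `C²` family of bijections of `ℝ^d` whose
inverses `ψ(t,·)` are differentiable with `det ∇_y ψ(t,y) ≥ c > 0`, then
`δ_p(v − φ(t,x)/ε) ⇀ 1`: for every continuous `θ(t,x,v)`, `ℤ^d`-periodic in `v`
and compactly supported in `(t,x) ∈ (0,∞) × ℝ^d`,
`∫_0^∞ ∫ θ(t,x,φ(t,x)/ε) dx dt → ∫_0^∞ ∫ ∫_{T^d} θ(t,x,v) dv dx dt` as `ε → 0⁺`. -/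
theorem statement17 (d : ℕ) (c : ℝ) (hc : 0 < c)
    (φ : ℝ → (Fin d → ℝ) → Fin d → ℝ)
    (hφ : ContDiff ℝ 2 (fun p : ℝ × (Fin d → ℝ) => φ p.1 p.2))
    (hφbij : ∀ t, Function.Bijective (φ t))
    (ψ : ℝ → (Fin d → ℝ) → Fin d → ℝ)
    (hψleft : ∀ t, Function.LeftInverse (ψ t) (φ t))
    (hψright : ∀ t, Function.RightInverse (ψ t) (φ t))
    (hψdiff : ∀ t y, DifferentiableAt ℝ (ψ t) y)
    (hdet : ∀ t y, c ≤ (fderiv ℝ (ψ t) y).det)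
    (θ : ℝ × (Fin d → ℝ) × (Fin d → ℝ) → ℝ) (hθc : Continuous θ)
    (hθper : ∀ (t : ℝ) (x v : Fin d → ℝ) (k : Fin d → ℤ),
      θ (t, x, v + fun i => (k i : ℝ)) = θ (t, x, v))
    (K : Set (ℝ × (Fin d → ℝ))) (hK : IsCompact K)
    (hKpos : K ⊆ Set.Ioi 0 ×ˢ Set.univ)
    (hθsupp : ∀ (t : ℝ) (x v : Fin d → ℝ), (t, x) ∉ K → θ (t, x, v) = 0) :
    Tendsto
      (fun ε : ℝ => ∫ t in Set.Ioi (0:ℝ), ∫ x, θ (t, x, ε⁻¹ • φ t x))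
      (𝓝[>] (0:ℝ))
      (𝓝 (∫ t in Set.Ioi (0:ℝ), ∫ x, ∫ v in cube d, θ (t, x, v))) :=
  statement17_general d φ hφ ψ hψleft hψright hψdiff θ hθc hθper K hK hθsupp
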